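/- Let ε > 0 and let τ(t) = t + ε e^{b(t+ε)} + (1/b)(1 - e^{b(t+ε)}) for b ≠ 0 (the solution of τ̇ = b(τ - t), τ(-ε) = 0). Then: (i) if b > 0 and εb ≥ 2, then τ(t) > t for all t ≥ -ε (no degeneration: the damping prevents shock formation); (ii) if εb ≤ 1/2 (in particular for any b < 0, or b > 0 with εb ≤ 1/2), then there is a unique T★ ≥ -ε with τ(T★) = T★, namely T★ = -(1/b) ln(1 - εb) - ε, and τ(t) > t for all t ∈ [-ε, T★). -/

import Mathlib

/-!
The gap `τ(t) - t` equals `ε` at `t = -ε` and has derivative `(εb - 1) e^{b(t+ε)}`.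
If `εb ≥ 1` it is nondecreasing, so it never drops below `ε`. If `εb < 1` it is strictly
decreasing, so it has at most one zero and is positive before it; solving
`e^{b(T+ε)} = 1 / (1 - εb)` shows the zero is `T★`, and `T★ ≥ -ε` because the gap is positive
at `-ε`.
-/

open Real

namespace ModulationODE

/-- `τ(t) - t` for the solution of `τ̇ = b(τ - t)`, `τ(-ε) = 0`. -/
noncomputable def gap (b ε t : ℝ) : ℝ :=
  ε * exp (b * (t + ε)) + (1 / b) * (1 - exp (b * (t + ε)))

/-- The shock time `T★`; it is a zero of the gap only when `εb < 1`. -/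
noncomputable def shockTime (b ε : ℝ) : ℝ :=
  -(1 / b) * log (1 - ε * b) - ε

variable {b ε : ℝ}

theorem gap_neg (b ε : ℝ) : gap b ε (-ε) = ε := by
  simp [gap]

theorem hasDerivAt_gap (hb : b ≠ 0) (t : ℝ) :
    HasDerivAt (gap b ε) ((ε * b - 1) * exp (b * (t + ε))) t := by
  have hexp : HasDerivAt (fun t => exp (b * (t + ε))) (exp (b * (t + ε)) * b) t := by
    simpa using (((hasDerivAt_id t).add_const ε).const_mul b).exp
  refine ((hexp.const_mul ε).add ((hexp.const_sub 1).const_mul (1 / b))).congr_deriv ?_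
  field_simp
  ring

theorem monotone_gap (hb : b ≠ 0) (h : 1 ≤ ε * b) : Monotone (gap b ε) :=
  monotone_of_deriv_nonneg (fun t => (hasDerivAt_gap hb t).differentiableAt) fun t => by
    rw [(hasDerivAt_gap hb t).deriv]
    exact mul_nonneg (by linarith) (exp_pos _).le

theorem strictAnti_gap (hb : b ≠ 0) (h : ε * b < 1) : StrictAnti (gap b ε) :=
  strictAnti_of_deriv_neg fun t => by
    rw [(hasDerivAt_gap hb t).deriv]
    exact mul_neg_of_neg_of_pos (by linarith) (exp_pos _)

theorem gap_shockTime (hb : b ≠ 0) (h : ε * b < 1) : gap b ε (shockTime b ε) = 0 := by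
  have hpos : 0 < 1 - ε * b := by linarith
  have hexp : exp (b * (shockTime b ε + ε)) = 1 / (1 - ε * b) := by
    rw [shockTime, show b * (-(1 / b) * log (1 - ε * b) - ε + ε) = -log (1 - ε * b) by
      field_simp; ring, exp_neg, exp_log hpos, one_div]
  rw [gap, hexp]
  field_simp
  ring

end ModulationODE

open ModulationODE in
/-- Degeneration of the self-similar change of variables for
`τ(t) = t + ε e^{b(t+ε)} + (1/b)(1 - e^{b(t+ε)})`:
(i) if `b > 0` and `εb ≥ 2` then `τ(t) > t` for all `t ≥ -ε` (no shock);
(ii) if `εb ≤ 1/2` then there is a unique `T★ ≥ -ε` with `τ(T★) = T★`, namely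
`T★ = -(1/b) ln(1 - εb) - ε`, and `τ(t) > t` on `[-ε, T★)`. -/
theorem modulation_ode_degeneration
    (b ε : ℝ) (hb : b ≠ 0) (hε : 0 < ε)
    (τ : ℝ → ℝ)
    (hτ : ∀ t : ℝ, τ t = t + ε * Real.exp (b * (t + ε))
      + (1 / b) * (1 - Real.exp (b * (t + ε)))) :
    (0 < b → 2 ≤ ε * b → ∀ t : ℝ, -ε ≤ t → t < τ t) ∧
    (ε * b ≤ 1 / 2 →
      -ε ≤ -(1 / b) * Real.log (1 - ε * b) - ε ∧
      τ (-(1 / b) * Real.log (1 - ε * b) - ε)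
        = -(1 / b) * Real.log (1 - ε * b) - ε ∧
      (∀ t : ℝ, -ε ≤ t → τ t = t → t = -(1 / b) * Real.log (1 - ε * b) - ε) ∧
      (∀ t : ℝ, -ε ≤ t → t < -(1 / b) * Real.log (1 - ε * b) - ε → t < τ t)) := by
  have hτ_gap : ∀ t, τ t = t + gap b ε t := fun t => by rw [hτ, gap, add_assoc]
  simp only [hτ_gap, lt_add_iff_pos_right, add_eq_left]
  refine ⟨fun _ hεb t ht => ?_, fun hεb => ?_⟩
  · exact hε.trans_le ((gap_neg b ε).symm.trans_le (monotone_gap (ε := ε) hb (by linarith) ht))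
  · have hanti := strictAnti_gap (ε := ε) hb (by linarith)
    have hT := gap_shockTime (ε := ε) hb (by linarith)
    rw [shockTime] at hT
    refine ⟨hanti.le_iff_ge.mp ?_, hT, fun t _ ht => hanti.injective (ht.trans hT.symm),
      fun t _ ht => hT ▸ hanti ht⟩
    rw [hT, gap_neg]
    exact hε.le
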